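/- arXiv:1508.02274 — 5 statements merged into one kernel-verified Lean document; each statement's English description precedes it below -/
import Mathlib

section
/- Let F be a field of characteristic different from 2 and let K = F(√a) be a quadratic extension of F (so a is not a square in F). Then K can be embedded in a cyclic extension L/F of degree 4 if and only if a is a sum of two squares in F. -/
/-! If `σ` generates `Gal(L/F) ≅ ℤ/4` and `y = √a ∈ L`, then `σ y = -y`, and some `θ ≠ 0` has
`σ² θ = -θ`. For `t = θ²`, the elements `t + σt`, `(t - σt) / y` and `θ σθ / y` are fixed by `σ`,
hence equal to some `c, d, e ∈ F`, and `4 (θ σθ)² = (t + σt)² - (t - σt)²` becomes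
`a (d² + (2e)²) = c²`: so `a` is a sum of two squares.

Conversely, if `a = u² + v²`, then `β = a + v√a` has norm `a u² = (u√a)²`. As `a u²` is not a
square in `F`, `β` is not a square in `K`, and `L = K(√β)` has degree `4` over `F`. The conjugation
of `K` lifts to `L` by `√β ↦ u√a / √β`, whose square is `√β ↦ -√β`; an automorphism of order
`4 = [L : F]` makes `L / F` cyclic Galois. -/

open Polynomial Module

theorem irreducible_X_sq_sub_C {K : Type*} [Field K] {b : K} (hb : ¬IsSquare b) :
    Irreducible (X ^ 2 - C b) :=
  X_pow_sub_C_irreducible_of_prime Nat.prime_two fun c hc => hb ⟨c, by rw [← hc, sq]⟩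

theorem exists_sq_add_sq_of_mul_sum_sq_eq_sq {F : Type*} [Field F] (h2 : (2 : F) ≠ 0)
    {a c d e : F} (he : e ≠ 0) (h : a * (d ^ 2 + e ^ 2) = c ^ 2) :
    ∃ u v : F, a = u ^ 2 + v ^ 2 := by
  by_cases hde : d ^ 2 + e ^ 2 = 0
  · obtain ⟨i, hi⟩ : ∃ i : F, i ^ 2 = -1 := ⟨d / e, by field_simp; linear_combination hde⟩
    refine ⟨(1 + a) / 2, i * (1 - a) / 2, ?_⟩
    field_simp
    linear_combination -(1 - a) ^ 2 * hi
  · refine ⟨c * d / (d ^ 2 + e ^ 2), c * e / (d ^ 2 + e ^ 2), ?_⟩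
    field_simp
    linear_combination h

section Forward

variable {F L : Type*} [Field F] [Field L] [Algebra F L]

theorem AlgEquiv.exists_ne_zero_apply_eq_neg {g : L ≃ₐ[F] L} (hg : g * g = 1) (hg1 : g ≠ 1) :
    ∃ θ ≠ 0, g θ = -θ := by
  obtain ⟨w, hw⟩ : ∃ w, g w ≠ w := by
    by_contra! h
    exact hg1 (AlgEquiv.ext h)
  refine ⟨w - g w, sub_ne_zero.2 hw.symm, ?_⟩
  have : g (g w) = w := by rw [← AlgEquiv.mul_apply, hg, AlgEquiv.one_apply]
  rw [map_sub, this, neg_sub]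

theorem IsGalois.mem_range_algebraMap_of_forall_mem_zpowers [IsGalois F L]
    [FiniteDimensional F L] {σ : L ≃ₐ[F] L} (hσ : ∀ g, g ∈ Subgroup.zpowers σ) {z : L}
    (hz : σ z = z) :
    z ∈ Set.range (algebraMap F L) :=
  (IsGalois.mem_range_algebraMap_iff_fixed z).2 fun g =>
    Subgroup.zpowers_le.2 (show σ ∈ MulAction.stabilizer _ z from hz) (hσ g)

theorem exists_sq_add_sq_of_orderOf_eq_four (h2 : (2 : F) ≠ 0) {σ : L ≃ₐ[F] L}
    (hσ : orderOf σ = 4) (hfix : ∀ z, σ z = z → z ∈ Set.range (algebraMap F L))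
    {a : F} (ha : ¬IsSquare a) {y : L} (hy : y ^ 2 = algebraMap F L a) :
    ∃ u v : F, a = u ^ 2 + v ^ 2 := by
  have hy0 : y ≠ 0 := by
    rintro rfl
    exact ha ⟨0, (algebraMap F L).injective (by simp [← hy])⟩
  have hσy : σ y = -y := by
    have hσy2 : σ y ^ 2 = y ^ 2 := by rw [← map_pow, hy, AlgEquiv.commutes]
    refine (sq_eq_sq_iff_eq_or_eq_neg.1 hσy2).resolve_left fun h => ?_
    obtain ⟨b, rfl⟩ := hfix y h
    exact ha ⟨b, (algebraMap F L).injective (by rw [← hy]; simp [sq])⟩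
  have hanti : ∀ z, σ z = -z → ∃ d : F, z = algebraMap F L d * y := by
    intro z hz
    obtain ⟨d, hd⟩ := hfix (z / y) (by rw [map_div₀, hz, hσy, neg_div_neg_eq])
    exact ⟨d, by rw [hd, div_mul_cancel₀ z hy0]⟩
  have hσ4 : σ ^ 4 = 1 := hσ ▸ pow_orderOf_eq_one σ
  obtain ⟨θ, hθ0, hθ⟩ := AlgEquiv.exists_ne_zero_apply_eq_neg (g := σ ^ 2)
    (by rw [← pow_add, hσ4]) (pow_ne_one_of_lt_orderOf (by norm_num) (by omega))
  have hσσ : ∀ z, σ (σ z) = (σ ^ 2) z := fun z => by rw [sq, AlgEquiv.mul_apply]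
  obtain ⟨c, hc⟩ := hfix (θ ^ 2 + σ (θ ^ 2)) (by simp only [map_add, map_pow, hσσ, hθ]; ring)
  obtain ⟨d, hd⟩ := hanti (θ ^ 2 - σ (θ ^ 2)) (by simp only [map_sub, map_pow, hσσ, hθ]; ring)
  obtain ⟨e, he⟩ := hanti (θ * σ θ) (by rw [map_mul, hσσ, hθ]; ring)
  have he0 : e ≠ 0 := by
    rintro rfl
    simp [hθ0] at he
  refine exists_sq_add_sq_of_mul_sum_sq_eq_sq h2 (mul_ne_zero h2 he0) (c := c) (d := d)
    ((algebraMap F L).injective ?_)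
  have key : 4 * (θ * σ θ) ^ 2 = (θ ^ 2 + σ (θ ^ 2)) ^ 2 - (θ ^ 2 - σ (θ ^ 2)) ^ 2 := by
    rw [map_pow]; ring
  rw [← hc, hd, he] at key
  simp only [map_mul, map_add, map_pow, map_ofNat, ← hy]
  linear_combination key

end Forward

section QuadraticExtension

variable {F K : Type*} [Field F] [Field K] [Algebra F K] {a : F} {x : K}

theorem exists_eq_algebraMap_add_mul_of_adjoin_eq_top (hx : x ^ 2 = algebraMap F K a)
    (hgen : Algebra.adjoin F {x} = ⊤) (z : K) :
    ∃ p q : F, z = algebraMap F K p + algebraMap F K q * x := by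
  have hz : z ∈ Algebra.adjoin F {x} := hgen ▸ Algebra.mem_top
  induction hz using Algebra.adjoin_induction with
  | mem z hz =>
    rw [Set.mem_singleton_iff.1 hz]
    exact ⟨0, 1, by simp⟩
  | algebraMap c => exact ⟨c, 0, by simp⟩
  | add z w _ _ hz hw =>
    obtain ⟨p, q, rfl⟩ := hz
    obtain ⟨p', q', rfl⟩ := hw
    exact ⟨p + p', q + q', by simp only [map_add]; ring⟩
  | mul z w _ _ hz hw =>
    obtain ⟨p, q, rfl⟩ := hz
    obtain ⟨p', q', rfl⟩ := hw
    refine ⟨p * p' + q * q' * a, p * q' + p' * q, ?_⟩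
    simp only [map_add, map_mul]
    linear_combination (algebraMap F K q * algebraMap F K q') * hx

theorem minpoly_eq_X_sq_sub_C (ha : ¬IsSquare a) (hx : x ^ 2 = algebraMap F K a) :
    minpoly F x = X ^ 2 - C a :=
  (minpoly.eq_of_irreducible_of_monic (irreducible_X_sq_sub_C ha) (by simp [hx])
    (monic_X_pow_sub_C a two_ne_zero)).symm

theorem exists_involutive_algHom_apply_eq_neg (ha : ¬IsSquare a) (hx : x ^ 2 = algebraMap F K a)
    (hgen : Algebra.adjoin F {x} = ⊤) :
    ∃ τ : K →ₐ[F] K, τ x = -x ∧ Function.Involutive τ := by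
  have hint : IsIntegral F x := .of_pow two_pos (hx ▸ isIntegral_algebraMap)
  let pb := PowerBasis.ofAdjoinEqTop' hint hgen
  have hroot : aeval (-x) (minpoly F pb.gen) = 0 := by
    simp [pb, minpoly_eq_X_sq_sub_C ha hx, hx]
  have hτx : pb.lift (-x) hroot x = -x := by simpa [pb] using pb.lift_gen (-x) hroot
  refine ⟨pb.lift (-x) hroot, hτx, fun z => ?_⟩
  have hττ : (pb.lift (-x) hroot).comp (pb.lift (-x) hroot) = AlgHom.id F K :=
    AlgHom.ext_of_adjoin_eq_top hgen fun _ h => by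
      rw [Set.mem_singleton_iff.1 h]
      simp [hτx]
  exact AlgHom.congr_fun hττ z

variable {τ : K →ₐ[F] K}

theorem mem_range_algebraMap_of_apply_eq_self (h2 : (2 : F) ≠ 0) (ha : ¬IsSquare a)
    (hx : x ^ 2 = algebraMap F K a) (hgen : Algebra.adjoin F {x} = ⊤) (hτx : τ x = -x) {z : K}
    (hz : τ z = z) : z ∈ Set.range (algebraMap F K) := by
  obtain ⟨p, q, rfl⟩ := exists_eq_algebraMap_add_mul_of_adjoin_eq_top hx hgen z
  have hx0 : x ≠ 0 := by
    rintro rfl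
    exact ha ⟨0, (algebraMap F K).injective (by simp [← hx])⟩
  have hq : algebraMap F K (2 * q) * x = 0 := by
    simp only [map_add, map_mul, AlgHom.commutes, hτx] at hz
    simp only [map_mul, map_ofNat]
    linear_combination -hz
  have hq0 : q = 0 := by simpa [h2, hx0] using hq
  exact ⟨p, by simp [hq0]⟩

theorem mul_apply_eq_sq_of_eq_sq_add_sq (hx : x ^ 2 = algebraMap F K a) (hτx : τ x = -x)
    {u v : F} (hav : a = u ^ 2 + v ^ 2) :
    (algebraMap F K a + algebraMap F K v * x) * τ (algebraMap F K a + algebraMap F K v * x) =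
      (algebraMap F K u * x) ^ 2 := by
  rw [hav] at hx ⊢
  simp only [map_add, map_mul, map_pow, AlgHom.commutes, hτx] at hx ⊢
  linear_combination (-(algebraMap F K u ^ 2 + algebraMap F K v ^ 2)) * hx

theorem not_isSquare_algebraMap_add_mul (h2 : (2 : F) ≠ 0) (ha : ¬IsSquare a)
    (hx : x ^ 2 = algebraMap F K a) (hgen : Algebra.adjoin F {x} = ⊤) {u v : F}
    (hav : a = u ^ 2 + v ^ 2) : ¬IsSquare (algebraMap F K a + algebraMap F K v * x) := by
  rintro ⟨γ, hγ⟩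
  obtain ⟨τ, hτx, hττ⟩ := exists_involutive_algHom_apply_eq_neg ha hx hgen
  obtain ⟨c, hc⟩ := mem_range_algebraMap_of_apply_eq_self h2 ha hx hgen hτx
    (z := γ * τ γ) (by rw [map_mul, hττ, mul_comm])
  have hnorm : algebraMap F K (c ^ 2) = algebraMap F K (u ^ 2 * a) := by
    calc algebraMap F K (c ^ 2) = (γ * γ) * τ (γ * γ) := by rw [map_pow, hc, map_mul]; ring
      _ = (algebraMap F K u * x) ^ 2 := by rw [← hγ, mul_apply_eq_sq_of_eq_sq_add_sq hx hτx hav]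
      _ = algebraMap F K (u ^ 2 * a) := by rw [mul_pow, hx, map_mul, map_pow]
  have hu : u ≠ 0 := by
    rintro rfl
    exact ha ⟨v, by rw [hav]; ring⟩
  exact ha ⟨c / u, by field_simp; linear_combination -(algebraMap F K).injective hnorm⟩

end QuadraticExtension

theorem isGalois_and_isCyclic_of_orderOf_eq_finrank {F L : Type*} [Field F] [Field L]
    [Algebra F L] [FiniteDimensional F L] {σ : L ≃ₐ[F] L} (hσ : orderOf σ = finrank F L) :
    IsGalois F L ∧ IsCyclic (L ≃ₐ[F] L) := by
  have hcard : Nat.card (L ≃ₐ[F] L) = finrank F L :=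
    le_antisymm (Nat.card_eq_fintype_card (α := L ≃ₐ[F] L) ▸ AlgEquiv.card_le)
      (hσ ▸ orderOf_le_card)
  exact ⟨IsGalois.of_card_aut_eq_finrank F L hcard,
    isCyclic_of_orderOf_eq_card σ (hσ.trans hcard.symm)⟩

namespace AdjoinRoot

variable {F K : Type*} [Field F] [Field K] [Algebra F K] {β : K}
  [Fact (Irreducible (X ^ 2 - C β))]

local notation "L" => AdjoinRoot (X ^ 2 - C β)

theorem root_X_sq_sub_C_sq : root (X ^ 2 - C β) ^ 2 = algebraMap K L β := by
  have h := eval₂_root (X ^ 2 - C β)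
  rw [eval₂_sub, eval₂_X_pow, eval₂_C, sub_eq_zero] at h
  exact h

theorem root_X_sq_sub_C_ne_zero : root (X ^ 2 - C β) ≠ 0 := by
  intro h
  have hβ : β = 0 := (algebraMap K L).injective (by rw [← root_X_sq_sub_C_sq, h]; simp)
  have hirr := (Fact.out : Irreducible (X ^ 2 - C β))
  rw [hβ, map_zero, sub_zero] at hirr
  exact not_irreducible_pow (by norm_num) hirr

theorem finrank_X_sq_sub_C : finrank K L = 2 := by
  have hne : X ^ 2 - C β ≠ 0 := X_pow_sub_C_ne_zero two_pos β
  rw [(powerBasis hne).finrank, powerBasis_dim, natDegree_X_pow_sub_C]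

theorem exists_algHom_lift_mul_root_eq (τ : K →ₐ[F] K) {ρ : K} (hρ : ρ ^ 2 = β * τ β) :
    ∃ σ : L →ₐ[F] L, (∀ k, σ (algebraMap K L k) = algebraMap K L (τ k)) ∧
      σ (root _) * root _ = algebraMap K L ρ := by
  have hroot : (X ^ 2 - C β).eval₂ ((IsScalarTower.toAlgHom F K L).comp τ)
      (algebraMap K L ρ / root _) = 0 := by
    rw [eval₂_sub, eval₂_X_pow, eval₂_C, div_pow, ← map_pow, hρ, root_X_sq_sub_C_sq, map_mul]
    have hβ : algebraMap K L β ≠ 0 :=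
      root_X_sq_sub_C_sq (β := β) ▸ pow_ne_zero 2 root_X_sq_sub_C_ne_zero
    rw [mul_div_cancel_left₀ _ hβ]
    simp
  refine ⟨liftAlgHom _ _ _ hroot, fun k => ?_, ?_⟩
  · simp
  · simp [root_X_sq_sub_C_ne_zero]

theorem exists_algEquiv_orderOf_eq_four [FiniteDimensional F L] (h2 : (2 : K) ≠ 0)
    {τ : K →ₐ[F] K} (hττ : Function.Involutive τ) {ρ : K} (hρ : ρ ^ 2 = β * τ β)
    (hτρ : τ ρ = -ρ) : ∃ σ : L ≃ₐ[F] L, orderOf σ = 4 := by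
  obtain ⟨σ, hσK, hσθ⟩ := exists_algHom_lift_mul_root_eq τ hρ
  set θ := root (X ^ 2 - C β)
  have hσσθ : σ (σ θ) = -θ := by
    have h := congrArg σ hσθ
    rw [map_mul, hσK, hτρ, map_neg, ← hσθ] at h
    have hσθ0 : σ θ ≠ 0 := (map_ne_zero_iff σ σ.toRingHom.injective).2 root_X_sq_sub_C_ne_zero
    exact mul_right_cancel₀ hσθ0 (by rw [h]; ring)
  have hσ4 : σ ^ 4 = 1 := by
    apply AdjoinRoot.algHom_ext'
    · ext k
      simp [pow_succ, ← AdjoinRoot.algebraMap_eq, hσK, hττ k]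
    · show σ (σ (σ (σ θ))) = θ
      rw [hσσθ, map_neg, map_neg, hσσθ, neg_neg]
  have hσ2 : σ ^ 2 ≠ 1 := by
    intro h
    rw [sq σ] at h
    have hθ := AlgHom.congr_fun h θ
    rw [AlgHom.mul_apply, hσσθ, AlgHom.one_apply] at hθ
    have h2L : (2 : L) ≠ 0 := by
      simpa only [map_ofNat] using (map_ne_zero (algebraMap K L)).2 h2
    have h2θ : (2 : L) * θ = 0 := by linear_combination -hθ
    exact root_X_sq_sub_C_ne_zero ((mul_eq_zero.1 h2θ).resolve_left h2L)
  refine ⟨(Algebra.IsAlgebraic.algEquivEquivAlgHom F L).symm σ, ?_⟩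
  rw [MulEquiv.orderOf_eq]
  exact orderOf_eq_prime_pow (p := 2) (n := 1) (by simpa using hσ2) (by simpa using hσ4)

theorem isGalois_and_isCyclic_of_X_sq_sub_C (hK : finrank F K = 2) (h2 : (2 : K) ≠ 0)
    {τ : K →ₐ[F] K} (hττ : Function.Involutive τ) {ρ : K} (hρ : ρ ^ 2 = β * τ β)
    (hτρ : τ ρ = -ρ) : IsGalois F L ∧ finrank F L = 4 ∧ IsCyclic (L ≃ₐ[F] L) := by
  have : FiniteDimensional F K := Module.finite_of_finrank_eq_succ hK
  have : FiniteDimensional K L := Module.finite_of_finrank_eq_succ finrank_X_sq_sub_C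
  have : FiniteDimensional F L := .trans F K L
  have hL4 : finrank F L = 4 := by rw [← finrank_mul_finrank F K, hK, finrank_X_sq_sub_C]
  obtain ⟨σ, hσ⟩ := exists_algEquiv_orderOf_eq_four h2 hττ hρ hτρ
  obtain ⟨hgal, hcyc⟩ := isGalois_and_isCyclic_of_orderOf_eq_finrank (hσ.trans hL4.symm)
  exact ⟨hgal, hL4, hcyc⟩

end AdjoinRoot

/-- Let `F` be a field of characteristic different from 2 and let `K = F(√a)` be a quadratic
extension of `F` (so `a` is not a square in `F`). Then `K` can be embedded in a cyclic extension
`L/F` of degree 4 if and only if `a` is a sum of two squares in `F`. -/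
theorem embeds_in_cyclic_deg_four_iff_sum_of_two_squares
    {F K : Type} [Field F] [Field K] [Algebra F K]
    (hchar : ringChar F ≠ 2)
    (a : F) (ha : ¬ IsSquare a)
    (x : K) (hx : x ^ 2 = algebraMap F K a)
    (hgen : Algebra.adjoin F ({x} : Set K) = ⊤)
    (hdeg : Module.finrank F K = 2) :
    (∃ (L : Type) (_ : Field L) (_ : Algebra F L) (_ : Algebra K L) (_ : IsScalarTower F K L),
        IsGalois F L ∧ Module.finrank F L = 4 ∧ IsCyclic (L ≃ₐ[F] L)) ↔
      ∃ u v : F, a = u ^ 2 + v ^ 2 := by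
  have h2 : (2 : F) ≠ 0 := Ring.two_ne_zero hchar
  constructor
  · rintro ⟨L, _, _, _, _, _, hL4, hcyc⟩
    have : FiniteDimensional F L := Module.finite_of_finrank_eq_succ hL4
    obtain ⟨σ, hσ⟩ := hcyc.exists_generator
    refine exists_sq_add_sq_of_orderOf_eq_four h2 (σ := σ) ?_
      (fun _ => IsGalois.mem_range_algebraMap_of_forall_mem_zpowers hσ) ha
      (y := algebraMap K L x) (by rw [← map_pow, hx, ← IsScalarTower.algebraMap_apply])
    rw [orderOf_eq_card_of_forall_mem_zpowers hσ, IsGalois.card_aut_eq_finrank, hL4]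
  · rintro ⟨u, v, hav⟩
    obtain ⟨τ, hτx, hττ⟩ := exists_involutive_algHom_apply_eq_neg ha hx hgen
    have : Fact (Irreducible (X ^ 2 - C (algebraMap F K a + algebraMap F K v * x))) :=
      ⟨irreducible_X_sq_sub_C (not_isSquare_algebraMap_add_mul h2 ha hx hgen hav)⟩
    have h2K : (2 : K) ≠ 0 := by simpa only [map_ofNat] using (map_ne_zero (algebraMap F K)).2 h2
    exact ⟨_, inferInstance, inferInstance, inferInstance, inferInstance,
      AdjoinRoot.isGalois_and_isCyclic_of_X_sq_sub_C hdeg h2K hττ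
        (mul_apply_eq_sq_of_eq_sq_add_sq hx hτx hav).symm
        (by rw [map_mul, AlgHom.commutes, hτx, mul_neg])⟩
end

section
/- Let p be a prime and let (b_n), (c_n), (w_n) be as follows: n·b_n = Σ_{m | n} m·c_m − Σ_{mp | n} mp·c_m for all n ≥ 1, and w_n = (1/n) Σ_{m | n} μ(n/m)·m·b_m. Then for any n divisible by p, c_n = c_{n/p} + w_n; consequently, if n = p^k·m with gcd(m,p) = 1, then c_n = w_m + w_{pm} + ··· + w_{p^k m}. -/
open Finset ArithmeticFunction

/-- Let `p` be a prime, with `n·b_n = ∑_{m ∣ n} m·c_m − ∑_{mp ∣ n} mp·c_m` for all `n ≥ 1`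
and `w_n = (1/n) ∑_{m ∣ n} μ(n/m)·m·b_m`.  Then for any `n` divisible by `p`,
`c_n = c_{n/p} + w_n`; consequently, if `n = p^k·m` with `gcd(m, p) = 1`, then
`c_n = w_m + w_{pm} + ⋯ + w_{p^k m}`. -/
theorem c_recurrence_and_sum
    (p : ℕ) (hp : p.Prime) (b c w : ℕ → ℚ)
    (hbc : ∀ n : ℕ, 1 ≤ n →
      (n : ℚ) * b n =
        (∑ m ∈ n.divisors, (m : ℚ) * c m) -
          ∑ m ∈ n.divisors with m * p ∣ n, ((m : ℚ) * p) * c m)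
    (hw : ∀ n : ℕ, 1 ≤ n →
      w n = (1 / (n : ℚ)) * ∑ m ∈ n.divisors, (moebius (n / m) : ℚ) * m * b m) :
    (∀ n : ℕ, 1 ≤ n → p ∣ n → c n = c (n / p) + w n) ∧
      (∀ k m : ℕ, 1 ≤ m → Nat.gcd m p = 1 →
        c (p ^ k * m) = ∑ i ∈ Finset.range (k + 1), w (p ^ i * m)) := by
  have hp0 : (0:ℕ) < p := hp.pos
  -- the auxiliary function
  set g : ℕ → ℚ := fun n => (n : ℚ) * c n - (if p ∣ n then (n : ℚ) * c (n / p) else 0)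
    with hgdef
  -- step 1: ∑_{d|n} g d = n b n
  have hsum : ∀ n : ℕ, n > 0 → ∑ d ∈ n.divisors, g d = (n : ℚ) * b n := by
    intro n hn
    rw [hbc n hn]
    have h2 : ∑ m ∈ n.divisors with m * p ∣ n, ((m : ℚ) * p) * c m
        = ∑ d ∈ n.divisors with p ∣ d, (d : ℚ) * c (d / p) := by
      refine Finset.sum_bij' (fun m _ => m * p) (fun d _ => d / p) ?_ ?_ ?_ ?_ ?_
      · intro a ha
        simp only [Finset.mem_filter, Nat.mem_divisors] at ha ⊢
        exact ⟨⟨ha.2, ha.1.2⟩, dvd_mul_left p a⟩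
      · intro d hd
        simp only [Finset.mem_filter, Nat.mem_divisors] at hd ⊢
        refine ⟨⟨dvd_trans (Nat.div_dvd_of_dvd hd.2) hd.1.1, hd.1.2⟩, ?_⟩
        rw [Nat.div_mul_cancel hd.2]
        exact hd.1.1
      · intro a _; exact Nat.mul_div_cancel a hp0
      · intro d hd
        simp only [Finset.mem_filter, Nat.mem_divisors] at hd
        exact Nat.div_mul_cancel hd.2
      · intro a ha
        simp only [Finset.mem_filter] at ha
        rw [Nat.mul_div_cancel a hp0]
        push_cast
        ring
    rw [h2, hgdef]
    rw [Finset.sum_sub_distrib]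
    congr 1
    rw [Finset.sum_filter]
  -- step 2: Möbius inversion gives g n = n * w n
  have key : ∀ n > 0, g n = (n : ℚ) * w n := by
    have hmob := (ArithmeticFunction.sum_eq_iff_sum_mul_moebius_eq
      (f := g) (g := fun n => (n : ℚ) * b n)).mp hsum
    intro n hn
    have h := hmob n hn
    have hn0 : (n : ℚ) ≠ 0 := Nat.cast_ne_zero.mpr hn.ne'
    rw [hw n hn, ← mul_assoc, mul_one_div, div_self hn0, one_mul, ← h,
      Nat.sum_divisorsAntidiagonal' (f := fun x y => (moebius x : ℚ) * ((y : ℚ) * b y))]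
    refine Finset.sum_congr rfl fun d _ => by ring
  have part1 : ∀ n : ℕ, 1 ≤ n → p ∣ n → c n = c (n / p) + w n := by
    intro n hn hpn
    have h := key n hn
    simp only [hgdef, if_pos hpn] at h
    have hn0 : (n : ℚ) ≠ 0 := by positivity
    have h2 : (n : ℚ) * c n = (n : ℚ) * (c (n / p) + w n) := by rw [mul_add]; linarith
    exact mul_left_cancel₀ hn0 h2
  refine ⟨part1, ?_⟩
  intro k m hm hgcd
  have hpm : ¬ p ∣ m := by
    intro hdvd
    have : p ∣ Nat.gcd m p := Nat.dvd_gcd hdvd dvd_rfl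
    rw [hgcd] at this
    exact Nat.Prime.one_lt hp |>.ne' (Nat.le_antisymm (Nat.le_of_dvd one_pos this) hp.one_lt.le ▸ rfl)
  induction k with
  | zero =>
    simp only [pow_zero, one_mul, zero_add, Finset.range_one, Finset.sum_singleton]
    have h := key m hm
    simp only [hgdef, if_neg hpm, sub_zero] at h
    exact mul_left_cancel₀ (by positivity : (m:ℚ) ≠ 0) h
  | succ k ih =>
    have hpos : 1 ≤ p ^ (k + 1) * m := Nat.one_le_iff_ne_zero.mpr (by positivity)
    have hdvd : p ∣ p ^ (k + 1) * m := dvd_mul_of_dvd_left (dvd_pow_self p (Nat.succ_ne_zero k)) m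
    have hdiv : p ^ (k + 1) * m / p = p ^ k * m := by
      rw [pow_succ, mul_comm (p ^ k) p, mul_assoc, Nat.mul_div_cancel_left _ hp0]
    rw [part1 _ hpos hdvd, hdiv, ih, Finset.sum_range_succ (fun i => w (p ^ i * m)) (k + 1)]
end

section
/- Let p be a prime and d ≥ 1. Define w_n = (1/n) Σ_{m | n} μ(m)·d^{n/m} (the necklace-counting numbers). Then the formal power series identity ∏_{n=1}^∞ (1/(1−t^n))^{w_n} = 1/(1−dt) holds in ℤ[[t]] (equivalently ℚ[[t]]). -/
open Finset ArithmeticFunction PowerSeries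

/-!
Take logarithmic derivatives with the Euler operator `t d/dt`. For
`F = ∏_{n ≤ N} (1 - t^n)^{-w_n}` this gives `t F' = F u` with `u = ∑_n w_n n t^n / (1 - t^n)`,
whose `t^k`-coefficient is `∑_{n ∣ k} n w_n`, and this equals `d^k` for `1 ≤ k ≤ N` by Möbius
inversion. For `G = 1/(1 - dt)` one has `t G' = G v` with `v = dt/(1 - dt) = ∑_{k ≥ 1} d^k t^k`.
Comparing coefficients in `t f' = f u` gives `k f_k = ∑_{i < k} f_i u_{k-i}` when `u` has no
constant term, so `F` and `G` agree up to degree `N`.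
-/

namespace Derivation

variable {R A : Type*} [CommSemiring R] [CommRing A] [Algebra R A] (D : Derivation R A A)

theorem map_pow_of_eq_mul {g u : A} (h : D g = g * u) (m : ℕ) : D (g ^ m) = g ^ m * (m • u) := by
  induction m with
  | zero => simp
  | succ m ih => rw [pow_succ, leibniz, ih, h, smul_eq_mul, smul_eq_mul, succ_nsmul]; ring

theorem map_prod_pow_of_eq_mul {ι : Type*} (s : Finset ι) {g u : ι → A}
    (h : ∀ i ∈ s, D (g i) = g i * u i) (m : ι → ℕ) :
    D (∏ i ∈ s, g i ^ m i) = (∏ i ∈ s, g i ^ m i) * ∑ i ∈ s, m i • u i := by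
  classical
  induction s using Finset.induction_on with
  | empty => simp
  | insert a s ha ih =>
    rw [prod_insert ha, sum_insert ha, leibniz, ih fun i hi => h i (mem_insert_of_mem hi),
      D.map_pow_of_eq_mul (h a (mem_insert_self a s)), smul_eq_mul, smul_eq_mul]
    ring

end Derivation

theorem Nat.filter_dvd_Icc_eq_divisors {j N : ℕ} (hj : j ≠ 0) (hjN : j ≤ N) :
    {n ∈ Icc 1 N | n ∣ j} = j.divisors := by
  ext n
  simp only [mem_filter, mem_Icc, Nat.mem_divisors]
  constructor
  · rintro ⟨-, hn⟩
    exact ⟨hn, hj⟩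
  · rintro ⟨hn, -⟩
    exact ⟨⟨Nat.pos_of_dvd_of_pos hn (by omega), (Nat.le_of_dvd (by omega) hn).trans hjN⟩, hn⟩

theorem sum_divisors_mul_eq_pow {K : Type*} [Field K] [CharZero K] (a : K) {w : ℕ → K}
    (hw : ∀ n : ℕ, 1 ≤ n → w n = (1 / (n : K)) * ∑ m ∈ n.divisors, (moebius m : K) * a ^ (n / m))
    {k : ℕ} (hk : 1 ≤ k) :
    ∑ n ∈ k.divisors, (n : K) * w n = a ^ k := by
  refine (sum_eq_iff_sum_mul_moebius_eq (f := fun n => (n : K) * w n)).2 (fun n hn => ?_) k hk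
  have hn0 : (n : K) ≠ 0 := Nat.cast_ne_zero.2 (by omega)
  rw [hw n hn, Nat.sum_divisorsAntidiagonal (f := fun a b => (moebius a : K) * _ ^ b)]
  field_simp

namespace PowerSeries

section Field

variable {K : Type*} [Field K]

theorem inv_one_sub_C_mul_X_pow (a : K) {n : ℕ} (hn : n ≠ 0) :
    (1 - C a * X ^ n)⁻¹ = expand n hn (rescale a (mk 1)) := by
  rw [inv_eq_iff_mul_eq_one (by simp [hn])]
  simpa [map_sub, rescale_X, expand_C] using
    congrArg (fun φ => expand n hn (rescale a φ)) (mk_one_mul_one_sub_eq_one (S := K))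

theorem coeff_inv_one_sub_C_mul_X_pow_sub_one (a : K) {n : ℕ} (hn : n ≠ 0) {j : ℕ} (hj : j ≠ 0) :
    coeff j ((1 - C a * X ^ n)⁻¹ - 1) = if n ∣ j then a ^ (j / n) else 0 := by
  simp [inv_one_sub_C_mul_X_pow a hn, coeff_expand, coeff_rescale, coeff_one, hj]

theorem X_mul_derivative_inv_one_sub_C_mul_X_pow (a : K) {n : ℕ} (hn : n ≠ 0) :
    X * d⁄dX K (1 - C a * X ^ n)⁻¹ = (1 - C a * X ^ n)⁻¹ * (n • ((1 - C a * X ^ n)⁻¹ - 1)) := by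
  simp only [derivative_inv', map_sub, Derivation.map_one_eq_zero, Derivation.leibniz,
    Derivation.leibniz_pow, derivative_X, derivative_C, smul_eq_mul, nsmul_eq_mul]
  set g := (1 - C a * X ^ n)⁻¹
  have hg : g * (1 - C a * X ^ n) = 1 := PowerSeries.inv_mul_cancel _ (by simp [hn])
  have hX : X * X ^ (n - 1) = (X : K⟦X⟧) ^ n := by rw [← pow_succ', Nat.sub_add_cancel (by omega)]
  linear_combination (g ^ 2 * C a * (n : K⟦X⟧)) * hX - ((n : K⟦X⟧) * g) * hg

theorem coeff_sum_nsmul_inv_one_sub_X_pow_sub_one (m : ℕ → ℕ) {N j : ℕ} (hj : j ∈ Icc 1 N) :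
    coeff j (∑ n ∈ Icc 1 N, m n • n • ((1 - X ^ n : K⟦X⟧)⁻¹ - 1)) =
      ∑ n ∈ j.divisors, (n : K) * m n := by
  obtain ⟨hj1, hjN⟩ := mem_Icc.1 hj
  rw [← Nat.filter_dvd_Icc_eq_divisors (by omega) hjN, sum_filter, map_sum]
  refine sum_congr rfl fun n hn => ?_
  have h := coeff_inv_one_sub_C_mul_X_pow_sub_one (1 : K) (n := n)
    (by rw [mem_Icc] at hn; omega) (by omega : j ≠ 0)
  simp only [map_one, one_mul, one_pow] at h
  rw [map_nsmul, map_nsmul, h]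
  split_ifs <;> simp [mul_comm]

end Field

variable {R : Type*} [CommRing R] [NoZeroDivisors R] [CharZero R]

theorem coeff_eq_of_X_mul_derivative_eq_mul {f g u v : R⟦X⟧} {N : ℕ}
    (h0 : constantCoeff f = constantCoeff g)
    (hf : X * d⁄dX R f = f * u) (hg : X * d⁄dX R g = g * v)
    (hu : constantCoeff u = 0) (hv : constantCoeff v = 0)
    (huv : ∀ j ∈ Icc 1 N, coeff j u = coeff j v) :
    ∀ k ≤ N, coeff k f = coeff k g := by
  intro k
  induction k using Nat.strong_induction_on with
  | _ k ih =>
    intro hk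
    rcases k with _ | m
    · simpa using h0
    have coeff_succ {φ ψ : R⟦X⟧} (h : X * d⁄dX R φ = φ * ψ) :
        coeff (m + 1) φ * (m + 1) = ∑ p ∈ antidiagonal (m + 1), coeff p.1 φ * coeff p.2 ψ := by
      rw [← coeff_mul, ← h, coeff_succ_X_mul, coeff_derivative]
    refine mul_right_cancel₀ (Nat.cast_add_one_ne_zero m) ?_
    rw [coeff_succ hf, coeff_succ hg]
    refine sum_congr rfl fun p hp => ?_
    rw [HasAntidiagonal.mem_antidiagonal] at hp
    rcases eq_or_ne p.2 0 with h2 | h2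
    · rw [h2, coeff_zero_eq_constantCoeff_apply, coeff_zero_eq_constantCoeff_apply, hu, hv,
        mul_zero, mul_zero]
    · rw [ih p.1 (by omega) (by omega), huv p.2 (mem_Icc.2 (by omega))]

end PowerSeries

theorem necklace_cyclotomic_identity_general
    (d : ℕ)
    (w : ℕ → ℚ)
    (hw : ∀ n : ℕ, 1 ≤ n →
      w n = (1 / (n : ℚ)) * ∑ m ∈ n.divisors, (moebius m : ℚ) * (d : ℚ) ^ (n / m))
    (W : ℕ → ℕ) (hW : ∀ n : ℕ, 1 ≤ n → (W n : ℚ) = w n) :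
    ∀ N k : ℕ, k ≤ N →
      PowerSeries.coeff (R := ℚ) k
          (∏ n ∈ Finset.Icc 1 N, ((1 - (PowerSeries.X : ℚ⟦X⟧) ^ n)⁻¹) ^ (W n)) =
        PowerSeries.coeff (R := ℚ) k ((1 - PowerSeries.C (R := ℚ) (d : ℚ) * PowerSeries.X)⁻¹) := by
  intro N
  have pos {n : ℕ} (hn : n ∈ Icc 1 N) : n ≠ 0 := by rw [mem_Icc] at hn; omega
  have euler_factor {n : ℕ} (hn : n ∈ Icc 1 N) :
      ((X : ℚ⟦X⟧) • d⁄dX ℚ) (1 - X ^ n)⁻¹ = (1 - X ^ n)⁻¹ * n • ((1 - X ^ n)⁻¹ - 1) := by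
    simpa only [Derivation.smul_apply, smul_eq_mul, map_one, one_mul] using
      X_mul_derivative_inv_one_sub_C_mul_X_pow (1 : ℚ) (pos hn)
  refine coeff_eq_of_X_mul_derivative_eq_mul
    (u := ∑ n ∈ Icc 1 N, W n • n • ((1 - X ^ n)⁻¹ - 1)) (v := (1 - C (d : ℚ) * X)⁻¹ - 1)
    ?_ ?_ ?_ ?_ ?_ ?_
  · rw [map_prod, prod_eq_one fun n hn => by simp [zero_pow (pos hn)]]
    simp
  · simpa only [Derivation.smul_apply, smul_eq_mul] using
      ((X : ℚ⟦X⟧) • d⁄dX ℚ).map_prod_pow_of_eq_mul (Icc 1 N) (fun n hn => euler_factor hn) W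
  · simpa only [pow_one, one_smul] using X_mul_derivative_inv_one_sub_C_mul_X_pow (d : ℚ) one_ne_zero
  · rw [map_sum, sum_eq_zero fun n hn => by simp [zero_pow (pos hn)]]
  · simp
  · intro j hj
    have hj1 : 1 ≤ j := (mem_Icc.1 hj).1
    have hG := coeff_inv_one_sub_C_mul_X_pow_sub_one (d : ℚ) one_ne_zero (by omega : j ≠ 0)
    simp only [pow_one, one_dvd, if_true, Nat.div_one] at hG
    rw [coeff_sum_nsmul_inv_one_sub_X_pow_sub_one W hj, hG, ← sum_divisors_mul_eq_pow _ hw hj1]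
    exact sum_congr rfl fun n hn => by rw [hW n (Nat.pos_of_mem_divisors hn)]

/-- Let `d ≥ 1` and let `w_n = (1/n) ∑_{m ∣ n} μ(m)·d^{n/m}` be the necklace-counting numbers
(which are nonnegative integers, witnessed by `W`).  Then the formal power series identity
`∏_{n=1}^∞ (1/(1−t^n))^{w_n} = 1/(1−dt)` holds, formalized coefficientwise: for every `N` the
coefficients up to degree `N` of the finite product `∏_{n=1}^N (1/(1−t^n))^{w_n}` agree with
those of `1/(1−dt)`. -/
theorem necklace_cyclotomic_identity
    (p d : ℕ) (hp : p.Prime) (hd : 1 ≤ d)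
    (w : ℕ → ℚ)
    (hw : ∀ n : ℕ, 1 ≤ n →
      w n = (1 / (n : ℚ)) * ∑ m ∈ n.divisors, (moebius m : ℚ) * (d : ℚ) ^ (n / m))
    (W : ℕ → ℕ) (hW : ∀ n : ℕ, 1 ≤ n → (W n : ℚ) = w n) :
    ∀ N k : ℕ, k ≤ N →
      PowerSeries.coeff (R := ℚ) k
          (∏ n ∈ Finset.Icc 1 N, ((1 - (PowerSeries.X : ℚ⟦X⟧) ^ n)⁻¹) ^ (W n)) =
        PowerSeries.coeff (R := ℚ) k ((1 - PowerSeries.C (R := ℚ) (d : ℚ) * PowerSeries.X)⁻¹) :=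
  necklace_cyclotomic_identity_general d w hw W hW
end

section
/- Let G = H ⋊ ⟨x⟩ where H = ℤ₂^d (the free ℤ₂-module of rank d, written multiplicatively), x has order 2, and x acts on H by inversion: x y x = y^{-1} for all y ∈ H. Let (G_{(n)}) denote the Zassenhaus 2-filtration of G. Then for every integer n ≥ 2, G_{(n)} = H^{2^s} where s = ⌈log₂ n⌉. -/
open scoped commutatorElement

/-!
Since `y ↦ x y x` inverts `H` and is multiplicative on `H` (use `y = 1` to get `x² = 1`), `H` is
abelian, and every `z x` with `z ∈ H` inverts `H` by conjugation.  Hence all squares and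
commutators of `G` are squares of elements of `H`, and a commutator with `b ∈ H` is `1` or `b⁻²`.
Writing `L s` for `G` if `s = 0` and for `H^(2^s)` otherwise, this gives `(L s)² ⊆ L (s + 1)`,
`[G, L s] ⊆ L (s + 1)` and `[L s, L t] = 1` for `s, t ≥ 1`.  As `⌈log₂ n⌉ = ⌈log₂ ⌈n/2⌉⌉ + 1` and
`⌈log₂ (j + 1)⌉ ≤ ⌈log₂ j⌉ + 1`, the sequence `L ⌈log₂ n⌉` obeys the recursion defining the
Zassenhaus filtration, and strong induction on `n` identifies the two.
-/

section PowClosure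

variable {G : Type*} [Group G]

def powClosure (H : Subgroup G) (k : ℕ) : Subgroup G :=
  Subgroup.closure {g : G | ∃ y ∈ H, g = y ^ k}

variable {H : Subgroup G}

theorem pow_mem_powClosure {y : G} (hy : y ∈ H) (k : ℕ) : y ^ k ∈ powClosure H k :=
  Subgroup.subset_closure ⟨y, hy, rfl⟩

theorem powClosure_le (H : Subgroup G) (k : ℕ) : powClosure H k ≤ H :=
  (Subgroup.closure_le H).mpr fun _ ⟨_, hy, hg⟩ => hg ▸ H.pow_mem hy k

theorem powClosure_mul_le (H : Subgroup G) (m k : ℕ) : powClosure H (m * k) ≤ powClosure H k :=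
  (Subgroup.closure_le _).mpr fun _ ⟨y, hy, hg⟩ => by
    rw [hg, pow_mul]
    exact pow_mem_powClosure (H.pow_mem hy m) k

theorem mem_powClosure_iff (hH : ∀ a ∈ H, ∀ b ∈ H, Commute a b) {k : ℕ} {g : G} :
    g ∈ powClosure H k ↔ ∃ y ∈ H, g = y ^ k := by
  refine ⟨fun hg => ?_, fun ⟨y, hy, hg⟩ => hg ▸ pow_mem_powClosure hy k⟩
  let K : Subgroup G :=
    { carrier := {g : G | ∃ y ∈ H, g = y ^ k}
      one_mem' := ⟨1, H.one_mem, (one_pow k).symm⟩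
      mul_mem' := by
        rintro _ _ ⟨y, hy, rfl⟩ ⟨z, hz, rfl⟩
        exact ⟨y * z, H.mul_mem hy hz, ((hH y hy z hz).mul_pow k).symm⟩
      inv_mem' := by
        rintro _ ⟨y, hy, rfl⟩
        exact ⟨y⁻¹, H.inv_mem hy, (inv_pow y k).symm⟩ }
  exact (Subgroup.closure_le K).mpr (fun _ h => h) hg

end PowClosure

section InversionAction

variable {G : Type*} [Group G] {H : Subgroup G} {x : G}

theorem mul_self_eq_one_of_conj_eq_inv (hact : ∀ y ∈ H, x * y * x = y⁻¹) : x * x = 1 := by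
  simpa using hact 1 H.one_mem

theorem commute_of_conj_eq_inv (hact : ∀ y ∈ H, x * y * x = y⁻¹) :
    ∀ a ∈ H, ∀ b ∈ H, Commute a b := by
  intro a ha b hb
  have hxx := mul_self_eq_one_of_conj_eq_inv hact
  have hinv : a⁻¹ * b⁻¹ = b⁻¹ * a⁻¹ :=
    calc a⁻¹ * b⁻¹ = x * a * (x * x) * b * x := by rw [← hact a ha, ← hact b hb]; group
      _ = (a * b)⁻¹ := by rw [hxx, mul_one, ← hact _ (H.mul_mem ha hb)]; group
      _ = b⁻¹ * a⁻¹ := mul_inv_rev a b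
  show a * b = b * a
  simpa using (congrArg (·⁻¹) hinv).symm

theorem mem_or_exists_eq_mul_of_conj_eq_inv (hcover : ∀ g : G, g ∈ H ∨ g * x ∈ H)
    (hact : ∀ y ∈ H, x * y * x = y⁻¹) (g : G) : g ∈ H ∨ ∃ z ∈ H, g = z * x := by
  refine (hcover g).imp_right fun hgx => ⟨g * x, hgx, ?_⟩
  rw [mul_assoc, mul_self_eq_one_of_conj_eq_inv hact, mul_one]

theorem mul_conj_eq_inv (hact : ∀ y ∈ H, x * y * x = y⁻¹) {z h : G} (hz : z ∈ H) (hh : h ∈ H) :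
    z * x * h * (z * x)⁻¹ = h⁻¹ := by
  have hxinv : x⁻¹ = x := inv_eq_of_mul_eq_one_right (mul_self_eq_one_of_conj_eq_inv hact)
  calc z * x * h * (z * x)⁻¹ = z * (x * h * x) * z⁻¹ := by rw [mul_inv_rev, hxinv]; group
    _ = h⁻¹ := by
      rw [hact h hh, (commute_of_conj_eq_inv hact z hz _ (H.inv_mem hh)).eq, mul_inv_cancel_right]

theorem mul_mul_mul_eq_mul_inv (hact : ∀ y ∈ H, x * y * x = y⁻¹) {w : G} (z : G) (hw : w ∈ H) :
    z * x * (w * x) = z * w⁻¹ := by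
  rw [← hact w hw]; group

theorem commutatorElement_eq_one_or_eq_inv_sq (hcover : ∀ g : G, g ∈ H ∨ g * x ∈ H)
    (hact : ∀ y ∈ H, x * y * x = y⁻¹) (a : G) {b : G} (hb : b ∈ H) :
    ⁅a, b⁆ = 1 ∨ ⁅a, b⁆ = b⁻¹ ^ 2 := by
  rcases mem_or_exists_eq_mul_of_conj_eq_inv hcover hact a with ha | ⟨z, hz, rfl⟩
  · exact Or.inl (commutatorElement_eq_one_iff_commute.mpr (commute_of_conj_eq_inv hact a ha b hb))
  · right
    rw [commutatorElement_def, mul_conj_eq_inv hact hz hb, sq]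

theorem commutatorElement_eq_one_or_eq_sq (hcover : ∀ g : G, g ∈ H ∨ g * x ∈ H)
    (hact : ∀ y ∈ H, x * y * x = y⁻¹) {a : G} (ha : a ∈ H) (b : G) :
    ⁅a, b⁆ = 1 ∨ ⁅a, b⁆ = a ^ 2 := by
  rw [← commutatorElement_inv]
  rcases commutatorElement_eq_one_or_eq_inv_sq hcover hact b ha with h | h <;> simp [h]

theorem sq_mem_powClosure_two (hcover : ∀ g : G, g ∈ H ∨ g * x ∈ H)
    (hact : ∀ y ∈ H, x * y * x = y⁻¹) (g : G) : g ^ 2 ∈ powClosure H 2 := by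
  rcases mem_or_exists_eq_mul_of_conj_eq_inv hcover hact g with hg | ⟨z, hz, rfl⟩
  · exact pow_mem_powClosure hg 2
  · rw [sq, mul_mul_mul_eq_mul_inv hact _ hz, mul_inv_cancel]
    exact Subgroup.one_mem _

theorem commutatorElement_mem_powClosure_two (hcover : ∀ g : G, g ∈ H ∨ g * x ∈ H)
    (hact : ∀ y ∈ H, x * y * x = y⁻¹) (a b : G) : ⁅a, b⁆ ∈ powClosure H 2 := by
  rcases mem_or_exists_eq_mul_of_conj_eq_inv hcover hact b with hb | ⟨w, hw, rfl⟩
  · rcases commutatorElement_eq_one_or_eq_inv_sq hcover hact a hb with h | h <;> rw [h]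
    exacts [Subgroup.one_mem _, pow_mem_powClosure (H.inv_mem hb) 2]
  rcases mem_or_exists_eq_mul_of_conj_eq_inv hcover hact a with ha | ⟨z, hz, rfl⟩
  · rcases commutatorElement_eq_one_or_eq_sq hcover hact ha (w * x) with h | h <;> rw [h]
    exacts [Subgroup.one_mem _, pow_mem_powClosure ha 2]
  · have hzw : ⁅z * x, w * x⁆ = (z * w⁻¹) ^ 2 := by
      rw [commutatorElement_def, mul_assoc (z * x * (w * x)), ← mul_inv_rev,
        mul_mul_mul_eq_mul_inv hact _ hw, mul_mul_mul_eq_mul_inv hact _ hz, mul_inv_rev, inv_inv,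
        sq]
    rw [hzw]
    exact pow_mem_powClosure (H.mul_mem hz (H.inv_mem hw)) 2

end InversionAction

section PowTwoFiltration

variable {G : Type*} [Group G] {H : Subgroup G} {x : G}

def powTwoFiltration (H : Subgroup G) : ℕ → Subgroup G
  | 0 => ⊤
  | s + 1 => powClosure H (2 ^ (s + 1))

theorem powTwoFiltration_le (H : Subgroup G) {s : ℕ} (hs : s ≠ 0) : powTwoFiltration H s ≤ H := by
  obtain ⟨_, rfl⟩ := Nat.exists_eq_succ_of_ne_zero hs
  exact powClosure_le H _

theorem pow_mem_powTwoFiltration {y : G} (hy : y ∈ H) : ∀ s, y ^ 2 ^ s ∈ powTwoFiltration H s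
  | 0 => Subgroup.mem_top _
  | _ + 1 => pow_mem_powClosure hy _

theorem powTwoFiltration_antitone (H : Subgroup G) : Antitone (powTwoFiltration H) := by
  refine antitone_nat_of_succ_le fun s => ?_
  cases s with
  | zero => exact le_top
  | succ s =>
    show powClosure H (2 ^ (s + 2)) ≤ powClosure H (2 ^ (s + 1))
    rw [pow_succ' 2 (s + 1)]
    exact powClosure_mul_le H 2 _

theorem sq_mem_powTwoFiltration_succ (hcover : ∀ g : G, g ∈ H ∨ g * x ∈ H)
    (hact : ∀ y ∈ H, x * y * x = y⁻¹) {g : G} :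
    ∀ {s}, g ∈ powTwoFiltration H s → g ^ 2 ∈ powTwoFiltration H (s + 1)
  | 0, _ => sq_mem_powClosure_two hcover hact g
  | s + 1, hg => by
    obtain ⟨y, hy, rfl⟩ := (mem_powClosure_iff (commute_of_conj_eq_inv hact)).mp hg
    rw [← pow_mul, ← pow_succ]
    exact pow_mem_powTwoFiltration hy (s + 2)

theorem commutatorElement_mem_powTwoFiltration_succ_of_right
    (hcover : ∀ g : G, g ∈ H ∨ g * x ∈ H) (hact : ∀ y ∈ H, x * y * x = y⁻¹) (a : G) {b : G} :
    ∀ {s}, b ∈ powTwoFiltration H s → ⁅a, b⁆ ∈ powTwoFiltration H (s + 1)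
  | 0, _ => commutatorElement_mem_powClosure_two hcover hact a b
  | s + 1, hb => by
    obtain ⟨y, hy, rfl⟩ := (mem_powClosure_iff (commute_of_conj_eq_inv hact)).mp hb
    rcases commutatorElement_eq_one_or_eq_inv_sq hcover hact a (H.pow_mem hy _) with h | h <;>
      rw [h]
    · exact Subgroup.one_mem _
    · rw [← inv_pow, ← pow_mul, ← pow_succ]
      exact pow_mem_powTwoFiltration (H.inv_mem hy) (s + 2)

theorem commutatorElement_mem_powTwoFiltration_succ_of_left
    (hcover : ∀ g : G, g ∈ H ∨ g * x ∈ H) (hact : ∀ y ∈ H, x * y * x = y⁻¹) {a : G} {s : ℕ}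
    (ha : a ∈ powTwoFiltration H s) (b : G) : ⁅a, b⁆ ∈ powTwoFiltration H (s + 1) := by
  rw [← commutatorElement_inv]
  exact Subgroup.inv_mem _ (commutatorElement_mem_powTwoFiltration_succ_of_right hcover hact b ha)

theorem Nat.clog_two_eq_clog_two_half_add_one {n : ℕ} (hn : 2 ≤ n) :
    Nat.clog 2 n = Nat.clog 2 ((n + 1) / 2) + 1 := by
  rw [Nat.clog_of_two_le one_lt_two hn]
  rfl

theorem Nat.clog_two_succ_le {j : ℕ} (hj : 1 ≤ j) : Nat.clog 2 (j + 1) ≤ Nat.clog 2 j + 1 := by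
  rw [Nat.clog_two_eq_clog_two_half_add_one (by omega)]
  exact Nat.add_le_add_right (Nat.clog_mono_right 2 (by omega)) 1

theorem sq_mem_powTwoFiltration_clog (hcover : ∀ g : G, g ∈ H ∨ g * x ∈ H)
    (hact : ∀ y ∈ H, x * y * x = y⁻¹) {n : ℕ} (hn : 2 ≤ n) {g : G}
    (hg : g ∈ powTwoFiltration H (Nat.clog 2 ((n + 1) / 2))) :
    g ^ 2 ∈ powTwoFiltration H (Nat.clog 2 n) :=
  Nat.clog_two_eq_clog_two_half_add_one hn ▸ sq_mem_powTwoFiltration_succ hcover hact hg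

theorem commutatorElement_mem_powTwoFiltration_clog (hcover : ∀ g : G, g ∈ H ∨ g * x ∈ H)
    (hact : ∀ y ∈ H, x * y * x = y⁻¹) {i j : ℕ} (hi : 1 ≤ i) (hj : 1 ≤ j) {a b : G}
    (ha : a ∈ powTwoFiltration H (Nat.clog 2 i)) (hb : b ∈ powTwoFiltration H (Nat.clog 2 j)) :
    ⁅a, b⁆ ∈ powTwoFiltration H (Nat.clog 2 (i + j)) := by
  rcases hi.eq_or_lt with rfl | hi
  · refine powTwoFiltration_antitone H ?_
      (commutatorElement_mem_powTwoFiltration_succ_of_right hcover hact a hb)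
    rw [add_comm]
    exact Nat.clog_two_succ_le hj
  rcases hj.eq_or_lt with rfl | hj
  · exact powTwoFiltration_antitone H (Nat.clog_two_succ_le hi.le)
      (commutatorElement_mem_powTwoFiltration_succ_of_left hcover hact ha b)
  have hmem {k : ℕ} (hk : 1 < k) {g : G} (hg : g ∈ powTwoFiltration H (Nat.clog 2 k)) : g ∈ H :=
    powTwoFiltration_le H (Nat.clog_pos one_lt_two hk).ne' hg
  rw [commutatorElement_eq_one_iff_commute.mpr
    (commute_of_conj_eq_inv hact a (hmem hi ha) b (hmem hj hb))]
  exact Subgroup.one_mem _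

end PowTwoFiltration

theorem zassenhaus_eq_powTwoFiltration {G : Type*} [Group G] {H : Subgroup G} {x : G}
    (hcover : ∀ g : G, g ∈ H ∨ g * x ∈ H) (hact : ∀ y ∈ H, x * y * x = y⁻¹)
    {Z : ℕ → Subgroup G} (hZ1 : Z 1 = ⊤)
    (hZrec : ∀ n : ℕ, 2 ≤ n → Z n = Subgroup.closure
      ({g : G | ∃ y ∈ Z ((n + 1) / 2), g = y ^ 2} ∪
        {g : G | ∃ i j : ℕ, 1 ≤ i ∧ 1 ≤ j ∧ i + j = n ∧
          ∃ a ∈ Z i, ∃ b ∈ Z j, g = ⁅a, b⁆}))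
    (n : ℕ) (hn : 1 ≤ n) : Z n = powTwoFiltration H (Nat.clog 2 n) := by
  induction n using Nat.strong_induction_on with
  | _ n ih =>
  rcases hn.eq_or_lt with rfl | hn
  · rw [hZ1, Nat.clog_one_right]
    rfl
  have hZhalf := ih ((n + 1) / 2) (by omega) (by omega)
  rw [hZrec n hn]
  apply le_antisymm
  · rw [Subgroup.closure_le]
    rintro _ (⟨y, hy, rfl⟩ | ⟨i, j, hi, hj, rfl, a, ha, b, hb, rfl⟩)
    · exact sq_mem_powTwoFiltration_clog hcover hact hn (hZhalf ▸ hy)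
    · rw [ih i (by omega) hi] at ha
      rw [ih j (by omega) hj] at hb
      exact commutatorElement_mem_powTwoFiltration_clog hcover hact hi hj ha hb
  · rw [Nat.clog_two_eq_clog_two_half_add_one hn, powTwoFiltration, powClosure,
      Subgroup.closure_le]
    rintro _ ⟨y, hy, rfl⟩
    refine Subgroup.subset_closure (Or.inl ⟨_, hZhalf ▸ pow_mem_powTwoFiltration hy _, ?_⟩)
    rw [← pow_mul, ← pow_succ]

theorem zassenhaus_of_semidirect_inversion_general
    {G : Type} [Group G]
    (H : Subgroup G) (x : G)
    (hcover : ∀ g : G, g ∈ H ∨ g * x ∈ H)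
    (hact : ∀ y ∈ H, x * y * x = y⁻¹)
    (Z : ℕ → Subgroup G)
    (hZ1 : Z 1 = ⊤)
    (hZrec : ∀ n : ℕ, 2 ≤ n → Z n = Subgroup.closure
      ({g : G | ∃ y ∈ Z ((n + 1) / 2), g = y ^ 2} ∪
        {g : G | ∃ i j : ℕ, 1 ≤ i ∧ 1 ≤ j ∧ i + j = n ∧
          ∃ a ∈ Z i, ∃ b ∈ Z j, g = ⁅a, b⁆})) :
    ∀ n : ℕ, 2 ≤ n →
      Z n = Subgroup.closure {g : G | ∃ y ∈ H, g = y ^ 2 ^ Nat.clog 2 n} := by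
  intro n hn
  rw [zassenhaus_eq_powTwoFiltration hcover hact hZ1 hZrec n (by omega)]
  obtain ⟨s, hs⟩ := Nat.exists_eq_succ_of_ne_zero (Nat.clog_pos one_lt_two hn).ne'
  rw [hs]
  rfl

/-- Let `G = H ⋊ ⟨x⟩` where `H ≅ ℤ₂^d` (the `d`-fold power of the 2-adic integers, written
multiplicatively), `x` has order 2 and acts on `H` by inversion.  Let `(Z n)` be the Zassenhaus
2-filtration of `G`, i.e. `Z 1 = G` and `Z n = (Z ⌈n/2⌉)² ∏_{i+j=n} [Z i, Z j]` (subgroups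
generated by the indicated squares and commutators).  Then for every `n ≥ 2`,
`Z n = H^(2^s)` where `s = ⌈log₂ n⌉`. -/
theorem zassenhaus_of_semidirect_inversion
    {G : Type} [Group G] (d : ℕ)
    (H : Subgroup G) (x : G)
    (hx2 : x ^ 2 = 1) (hx1 : x ≠ 1) (hxH : x ∉ H)
    (hcover : ∀ g : G, g ∈ H ∨ g * x ∈ H)
    (hact : ∀ y ∈ H, x * y * x = y⁻¹)
    (e : H ≃* Multiplicative (Fin d → ℤ_[2]))
    (Z : ℕ → Subgroup G)
    (hZ1 : Z 1 = ⊤)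
    (hZrec : ∀ n : ℕ, 2 ≤ n → Z n = Subgroup.closure
      ({g : G | ∃ y ∈ Z ((n + 1) / 2), g = y ^ 2} ∪
        {g : G | ∃ i j : ℕ, 1 ≤ i ∧ 1 ≤ j ∧ i + j = n ∧
          ∃ a ∈ Z i, ∃ b ∈ Z j, g = ⁅a, b⁆})) :
    ∀ n : ℕ, 2 ≤ n →
      Z n = Subgroup.closure {g : G | ∃ y ∈ H, g = y ^ 2 ^ Nat.clog 2 n} :=
  zassenhaus_of_semidirect_inversion_general H x hcover hact Z hZ1 hZrec
end

section
/- Let p be a prime and let U_{n+1}(F_p) denote the group of upper-triangular unipotent (n+1)×(n+1) matrices over F_p. Then the n-th term of the Zassenhaus p-filtration of U_{n+1}(F_p) equals the center Z(U_{n+1}(F_p)), which is isomorphic to F_p; moreover n = max{ h : U_{n+1}(F_p)_{(h)} ≠ 1 }. -/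
open Matrix
open scoped commutatorElement

private lemma diag_mul_of_triangular {n : ℕ} {R : Type} [CommRing R]
    (M N : Matrix (Fin n) (Fin n) R)
    (hM : ∀ i j : Fin n, j < i → M i j = 0)
    (hN : ∀ i j : Fin n, j < i → N i j = 0) (i : Fin n) :
    (M * N) i i = M i i * N i i := by
  rw [Matrix.mul_apply]
  refine Finset.sum_eq_single i (fun k _ hk => ?_) (by simp)
  rcases lt_or_gt_of_ne hk with h | h
  · rw [hM i k h, zero_mul]
  · rw [hN k i h, mul_zero]

/-- The group `U_n(F_p)` of upper-triangular unipotent `n × n` matrices over `F_p`,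
as a subgroup of the units of the matrix ring. -/
def unipotentUpperTriangular (p n : ℕ) [Fact p.Prime] :
    Subgroup (Matrix (Fin n) (Fin n) (ZMod p))ˣ where
  carrier := {M | (∀ i j : Fin n, j < i → (M : Matrix (Fin n) (Fin n) (ZMod p)) i j = 0) ∧
      ∀ i : Fin n, (M : Matrix (Fin n) (Fin n) (ZMod p)) i i = 1}
  one_mem' := by
    constructor
    · intro i j h
      simp [Matrix.one_apply, (ne_of_lt h).symm]
    · intro i; simp
  mul_mem' := by
    rintro a b ⟨haT, haD⟩ ⟨hbT, hbD⟩
    constructor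
    · intro i j h
      rw [Units.val_mul, Matrix.mul_apply]
      refine Finset.sum_eq_zero fun k _ => ?_
      rcases le_or_gt k j with hk | hk
      · rw [haT i k (lt_of_le_of_lt hk h), zero_mul]
      · rw [hbT k j hk, mul_zero]
    · intro i
      rw [Units.val_mul, diag_mul_of_triangular _ _ haT hbT i, haD i, hbD i, one_mul]
  inv_mem' := by
    rintro a ⟨haT, haD⟩
    have hA : ((a⁻¹ : (Matrix (Fin n) (Fin n) (ZMod p))ˣ) : Matrix (Fin n) (Fin n) (ZMod p)) =
        (a : Matrix (Fin n) (Fin n) (ZMod p))⁻¹ := by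
      rw [Matrix.coe_units_inv]
    have hdet : IsUnit (a : Matrix (Fin n) (Fin n) (ZMod p)).det :=
      (Matrix.isUnit_iff_isUnit_det _).1 a.isUnit
    haveI : Invertible (a : Matrix (Fin n) (Fin n) (ZMod p)) :=
      Matrix.invertibleOfIsUnitDet _ hdet
    have htri : BlockTriangular ((a : Matrix (Fin n) (Fin n) (ZMod p))⁻¹) id :=
      Matrix.blockTriangular_inv_of_blockTriangular (fun i j h => haT i j h)
    have hTri' : ∀ i j : Fin n, j < i →
        ((a : Matrix (Fin n) (Fin n) (ZMod p))⁻¹) i j = 0 := fun i j h => htri h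
    constructor
    · intro i j h
      rw [hA]; exact hTri' i j h
    · intro i
      have h1 : ((a : Matrix (Fin n) (Fin n) (ZMod p))⁻¹ *
          (a : Matrix (Fin n) (Fin n) (ZMod p))) i i = 1 := by
        rw [Matrix.nonsing_inv_mul _ hdet]; simp
      rw [diag_mul_of_triangular _ _ hTri' haT i, haD i, mul_one] at h1
      rw [hA]; exact h1

/-! Let `F m` be the subgroup of those `g` for which `g - 1` vanishes on the diagonal and the first
`m - 1` superdiagonals. Then `F 1` is everything, `F (n + 1) = 1`, `[F i, F j] ≤ F (i + j)`, and
`(F k)^p ≤ F (p k)` because `(1 + X)^p = 1 + X^p` in characteristic `p`; since the Zassenhaus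
filtration is the fastest descending filtration with these properties, `Z m ≤ F m`. A matrix in
`F n` is `1 + c E₀ₙ`, and these corner transvections are exactly the center, a copy of `F_p`.
Conversely `[1 + a E₀ₘ, 1 + E_{m,m+1}] = 1 + a E_{0,m+1}`, so induction on `m` puts every corner
transvection into `Z n`. -/

theorem Fin.zero_lt_last {n : ℕ} (hn : 0 < n) : (0 : Fin (n + 1)) < Fin.last n :=
  Fin.lt_def.2 hn

-- `(m + p - 1) / p` is `⌈m / p⌉`.
structure IsZassenhausFiltration {G : Type*} [Group G] (p : ℕ) (Z : ℕ → Subgroup G) :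
    Prop where
  one : Z 1 = ⊤
  eq_closure : ∀ m : ℕ, 2 ≤ m → Z m = Subgroup.closure
    ({g | ∃ y ∈ Z ((m + p - 1) / p), g = y ^ p} ∪
      {g | ∃ i j : ℕ, 1 ≤ i ∧ 1 ≤ j ∧ i + j = m ∧
        ∃ a ∈ Z i, ∃ b ∈ Z j, g = ⁅a, b⁆})

namespace IsZassenhausFiltration

variable {G : Type*} [Group G] {p : ℕ} {Z : ℕ → Subgroup G}

theorem commutator_mem (hZ : IsZassenhausFiltration p Z) {i j : ℕ} (hi : 1 ≤ i) (hj : 1 ≤ j)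
    {a b : G} (ha : a ∈ Z i) (hb : b ∈ Z j) : ⁅a, b⁆ ∈ Z (i + j) := by
  rw [hZ.eq_closure _ (by omega)]
  exact Subgroup.subset_closure (Or.inr ⟨i, j, hi, hj, rfl, a, ha, b, hb, rfl⟩)

theorem le_of_restricted (hZ : IsZassenhausFiltration p Z) (hp : 1 < p) {F : ℕ → Subgroup G}
    (hF1 : F 1 = ⊤) (hF : Antitone F)
    (hcomm : ∀ i j, ∀ a ∈ F i, ∀ b ∈ F j, ⁅a, b⁆ ∈ F (i + j))
    (hpow : ∀ k, ∀ g ∈ F k, g ^ p ∈ F (p * k)) : ∀ m, 1 ≤ m → Z m ≤ F m := by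
  intro m
  induction m using Nat.strong_induction_on with
  | _ m ih =>
    intro hm
    obtain rfl | hm2 := hm.eq_or_lt
    · rw [hF1]; exact le_top
    rw [hZ.eq_closure m hm2, Subgroup.closure_le]
    rintro g (⟨y, hy, rfl⟩ | ⟨i, j, hi, hj, rfl, a, ha, b, hb, rfl⟩)
    · have hk1 : 1 ≤ (m + p - 1) / p := (Nat.le_div_iff_mul_le (by omega)).2 (by omega)
      have hkm : (m + p - 1) / p < m := by
        have : m + p < m * p + 1 := by nlinarith
        exact (Nat.div_lt_iff_lt_mul (by omega)).2 (by omega)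
      have hmk : m ≤ p * ((m + p - 1) / p) := by
        rw [← Nat.ceilDiv_eq_add_pred_div]
        exact (ceilDiv_le_iff_le_mul (by omega)).1 le_rfl
      exact hF hmk (hpow _ y (ih _ hkm hk1 hy))
    · exact hcomm i j a (ih i (by omega) hi ha) b (ih j (by omega) hj hb)

end IsZassenhausFiltration

namespace Matrix

variable {R : Type*} {N : ℕ}

def IsUpperBy [Zero R] (c : ℕ) (A : Matrix (Fin N) (Fin N) R) : Prop :=
  ∀ i j : Fin N, (j : ℕ) < i + c → A i j = 0

namespace IsUpperBy

theorem mono [Zero R] {c d : ℕ} {A : Matrix (Fin N) (Fin N) R} (hA : A.IsUpperBy c)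
    (hdc : d ≤ c) : A.IsUpperBy d :=
  fun i j h => hA i j (by omega)

theorem one [Zero R] [One R] : (1 : Matrix (Fin N) (Fin N) R).IsUpperBy 0 :=
  fun _ _ h => one_apply_ne (Fin.ne_of_gt h)

theorem add [AddZeroClass R] {c : ℕ} {A B : Matrix (Fin N) (Fin N) R} (hA : A.IsUpperBy c)
    (hB : B.IsUpperBy c) : (A + B).IsUpperBy c := by
  intro i j h
  rw [add_apply, hA i j h, hB i j h, add_zero]

theorem neg [NegZeroClass R] {c : ℕ} {A : Matrix (Fin N) (Fin N) R} (hA : A.IsUpperBy c) :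
    (-A).IsUpperBy c := by
  intro i j h
  rw [neg_apply, hA i j h, neg_zero]

theorem sub [AddGroup R] {c : ℕ} {A B : Matrix (Fin N) (Fin N) R} (hA : A.IsUpperBy c)
    (hB : B.IsUpperBy c) : (A - B).IsUpperBy c := by
  intro i j h
  rw [sub_apply, hA i j h, hB i j h, sub_zero]

theorem mul [NonUnitalNonAssocSemiring R] {c d : ℕ} {A B : Matrix (Fin N) (Fin N) R}
    (hA : A.IsUpperBy c) (hB : B.IsUpperBy d) : (A * B).IsUpperBy (c + d) := by
  intro i j h
  rw [mul_apply]
  refine Finset.sum_eq_zero fun k _ => ?_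
  by_cases hk : (k : ℕ) < i + c
  · rw [hA i k hk, zero_mul]
  · rw [hB k j (by omega), mul_zero]

theorem pow [Semiring R] {c : ℕ} {A : Matrix (Fin N) (Fin N) R} (hA : A.IsUpperBy c) (s : ℕ) :
    (A ^ s).IsUpperBy (s * c) := by
  induction s with
  | zero => simpa using one
  | succ s ih => simpa [pow_succ, add_mul] using ih.mul hA

theorem eq_zero [Zero R] {c : ℕ} {A : Matrix (Fin N) (Fin N) R} (hA : A.IsUpperBy c)
    (hc : N ≤ c) : A = 0 :=
  ext fun i j => hA i j (by omega)

theorem eq_single [Zero R] {n : ℕ} {A : Matrix (Fin (n + 1)) (Fin (n + 1)) R}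
    (hA : A.IsUpperBy n) : A = single 0 (Fin.last n) (A 0 (Fin.last n)) := by
  ext i j
  by_cases hij : 0 = i ∧ Fin.last n = j
  · rw [← hij.1, ← hij.2, single_apply_same]
  · rw [single_apply_of_ne _ _ _ _ _ hij, hA i j ?_]
    rw [Fin.ext_iff, Fin.ext_iff, Fin.val_last, Fin.val_zero] at hij
    omega

theorem single [Zero R] {c : ℕ} {i j : Fin N} {a : R} (hij : (i : ℕ) + c ≤ j) :
    (single i j a).IsUpperBy c := by
  intro i' j' h
  exact single_apply_of_ne _ _ _ _ _ (by rintro ⟨rfl, rfl⟩; omega)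

end IsUpperBy

variable {n : Type*} [Fintype n] [DecidableEq n] [CommRing R]

theorem transvection_mul_transvection_of_ne {i j k : n} (hik : i ≠ k) (hjk : j ≠ k)
    (a b : R) :
    transvection i j a * transvection j k b =
      transvection i k (a * b) * (transvection j k b * transvection i j a) := by
  simp only [transvection, mul_add, mul_one, add_mul, one_mul, single_mul_single_same, ne_eq,
    hik.symm, hjk.symm, not_false_eq_true, single_mul_single_of_ne, add_zero]
  abel

end Matrix

namespace unipotentUpperTriangular

variable {p N : ℕ} [Fact p.Prime]

def toMatrix : unipotentUpperTriangular p N →* Matrix (Fin N) (Fin N) (ZMod p) :=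
  (Units.coeHom _).comp (unipotentUpperTriangular p N).subtype

theorem toMatrix_injective : Function.Injective (toMatrix (p := p) (N := N)) :=
  fun _ _ h => Subtype.ext (Units.ext h)

theorem isUpperBy_toMatrix (g : unipotentUpperTriangular p N) : (toMatrix g).IsUpperBy 0 :=
  fun i j h => g.2.1 i j h

theorem toMatrix_apply_self (g : unipotentUpperTriangular p N) (i : Fin N) :
    toMatrix g i i = 1 :=
  g.2.2 i

theorem isUpperBy_toMatrix_sub_one (g : unipotentUpperTriangular p N) :
    (toMatrix g - 1).IsUpperBy 1 := by
  intro i j h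
  obtain rfl | hji := eq_or_ne i j
  · rw [Matrix.sub_apply, one_apply_eq, toMatrix_apply_self, sub_self]
  · exact (isUpperBy_toMatrix g).sub IsUpperBy.one i j (by omega)

theorem toMatrix_commutator_sub_one (a b : unipotentUpperTriangular p N) :
    toMatrix ⁅a, b⁆ - 1 =
      ((toMatrix a - 1) * (toMatrix b - 1) - (toMatrix b - 1) * (toMatrix a - 1)) *
        toMatrix (a⁻¹ * b⁻¹) := by
  have hinv : toMatrix (b * a) * toMatrix (a⁻¹ * b⁻¹) = 1 := by
    rw [← map_mul, show b * a * (a⁻¹ * b⁻¹) = 1 by group, map_one]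
  calc toMatrix ⁅a, b⁆ - 1
      = (toMatrix (a * b) - toMatrix (b * a)) * toMatrix (a⁻¹ * b⁻¹) := by
        rw [sub_mul, hinv, ← map_mul, show ⁅a, b⁆ = a * b * (a⁻¹ * b⁻¹) by group]
    _ = _ := by
        rw [map_mul toMatrix a b, map_mul toMatrix b a]
        noncomm_ring

theorem toMatrix_pow_char_sub_one [Nonempty (Fin N)] (g : unipotentUpperTriangular p N) :
    toMatrix (g ^ p) - 1 = (toMatrix g - 1) ^ p := by
  rw [map_pow, sub_pow_char_of_commute _ (Commute.one_right _), one_pow]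

variable (p N) in
def filtration (m : ℕ) : Subgroup (unipotentUpperTriangular p N) where
  carrier := {g | (toMatrix g - 1).IsUpperBy m}
  one_mem' := by
    show (toMatrix (1 : unipotentUpperTriangular p N) - 1).IsUpperBy m
    rw [map_one, sub_self]
    exact fun _ _ _ => rfl
  mul_mem' {a b} ha hb := by
    have h : toMatrix (a * b) - 1 = (toMatrix a - 1) * toMatrix b + (toMatrix b - 1) := by
      rw [map_mul]; noncomm_ring
    show (toMatrix (a * b) - 1).IsUpperBy m
    rw [h]
    exact (ha.mul (isUpperBy_toMatrix b)).add hb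
  inv_mem' {a} ha := by
    have h : toMatrix a⁻¹ - 1 = -(toMatrix a⁻¹ * (toMatrix a - 1)) := by
      rw [mul_sub, ← map_mul, inv_mul_cancel, map_one, mul_one, neg_sub]
    show (toMatrix a⁻¹ - 1).IsUpperBy m
    rw [h]
    exact (((isUpperBy_toMatrix a⁻¹).mul ha).mono le_add_self).neg

theorem mem_filtration {m : ℕ} {g : unipotentUpperTriangular p N} :
    g ∈ filtration p N m ↔ (toMatrix g - 1).IsUpperBy m :=
  Iff.rfl

theorem filtration_one : filtration p N 1 = ⊤ :=
  eq_top_iff.2 fun g _ => isUpperBy_toMatrix_sub_one g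

theorem filtration_antitone : Antitone (filtration p N) :=
  fun _ _ hm _ hg => IsUpperBy.mono hg hm

theorem filtration_eq_bot {m : ℕ} (hm : N ≤ m) : filtration p N m = ⊥ :=
  eq_bot_iff.2 fun _ hg => toMatrix_injective (sub_eq_zero.1 (hg.eq_zero hm))

theorem commutator_mem_filtration {i j : ℕ} {a b : unipotentUpperTriangular p N}
    (ha : a ∈ filtration p N i) (hb : b ∈ filtration p N j) :
    ⁅a, b⁆ ∈ filtration p N (i + j) := by
  rw [mem_filtration, toMatrix_commutator_sub_one]
  exact ((ha.mul hb).sub (add_comm i j ▸ hb.mul ha)).mul (isUpperBy_toMatrix _)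

theorem pow_char_mem_filtration [Nonempty (Fin N)] {k : ℕ} {g : unipotentUpperTriangular p N}
    (hg : g ∈ filtration p N k) : g ^ p ∈ filtration p N (p * k) := by
  rw [mem_filtration, toMatrix_pow_char_sub_one]
  exact hg.pow p

def ofTransvection {i j : Fin N} (hij : i < j) (c : ZMod p) : unipotentUpperTriangular p N :=
  ⟨⟨transvection i j c, transvection i j (-c),
      by rw [transvection_mul_transvection_same _ _ hij.ne, add_neg_cancel, transvection_zero],
      by rw [transvection_mul_transvection_same _ _ hij.ne, neg_add_cancel, transvection_zero]⟩,
    fun i' j' h => by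
      change (1 + single i j c : Matrix (Fin N) (Fin N) (ZMod p)) i' j' = 0
      rw [Matrix.add_apply, one_apply_ne h.ne', zero_add]
      exact single_apply_of_ne _ _ _ _ _ (by rintro ⟨rfl, rfl⟩; exact hij.not_gt h),
    fun i' => by
      change (1 + single i j c : Matrix (Fin N) (Fin N) (ZMod p)) i' i' = 1
      rw [Matrix.add_apply, one_apply_eq, add_eq_left]
      exact single_apply_of_ne _ _ _ _ _ (by rintro ⟨rfl, rfl⟩; exact hij.false)⟩

theorem toMatrix_ofTransvection {i j : Fin N} (hij : i < j) (c : ZMod p) :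
    toMatrix (ofTransvection hij c) = transvection i j c :=
  rfl

theorem commutator_ofTransvection {i j k : Fin N} (hij : i < j) (hjk : j < k) (a b : ZMod p) :
    ⁅ofTransvection hij a, ofTransvection hjk b⁆ = ofTransvection (hij.trans hjk) (a * b) := by
  have h : ofTransvection hij a * ofTransvection hjk b =
      ofTransvection (hij.trans hjk) (a * b) * (ofTransvection hjk b * ofTransvection hij a) :=
    toMatrix_injective <| by
      simpa only [map_mul, toMatrix_ofTransvection] using
        transvection_mul_transvection_of_ne (hij.trans hjk).ne hjk.ne a b
  rw [commutatorElement_def, h]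
  group

section Center

variable {n : ℕ}

theorem commute_single_of_mem_center {g : unipotentUpperTriangular p N}
    (hg : g ∈ Subgroup.center _) {i j : Fin N} (hij : i < j) :
    Commute (single i j 1) (toMatrix g) := by
  have h := congrArg toMatrix (Subgroup.mem_center_iff.1 hg (ofTransvection hij 1))
  rw [map_mul, map_mul, toMatrix_ofTransvection, transvection, add_mul, mul_add, one_mul,
    mul_one] at h
  exact add_left_cancel h

theorem mem_filtration_of_mem_center {g : unipotentUpperTriangular p (n + 1)}
    (hg : g ∈ Subgroup.center _) : g ∈ filtration p (n + 1) n := by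
  intro i j hij
  rcases le_or_gt (j : ℕ) i with hji | hij'
  · exact isUpperBy_toMatrix_sub_one g i j (by omega)
  rw [Matrix.sub_apply, one_apply_ne (Fin.ne_of_lt hij'), sub_zero]
  rcases Nat.eq_zero_or_pos (i : ℕ) with hi | hi
  · have hjk : j < ⟨j + 1, by omega⟩ := Fin.lt_def.2 (Nat.lt_succ_self _)
    exact col_eq_zero_of_commute_single (commute_single_of_mem_center hg hjk)
      (Fin.ne_of_lt hij')
  · have hki : (⟨i - 1, by omega⟩ : Fin (n + 1)) < i :=
      Fin.lt_def.2 (Nat.sub_lt hi Nat.one_pos)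
    exact row_eq_zero_of_commute_single (commute_single_of_mem_center hg hki)
      (Fin.ne_of_gt hij')

def cornerHom (hn : 0 < n) : Multiplicative (ZMod p) →* unipotentUpperTriangular p (n + 1) where
  toFun c := ofTransvection (Fin.zero_lt_last hn) c.toAdd
  map_one' := toMatrix_injective <| by
    rw [toMatrix_ofTransvection, map_one toMatrix, toAdd_one]
    exact transvection_zero _ _
  map_mul' a b := toMatrix_injective <| by
    rw [map_mul toMatrix, toMatrix_ofTransvection, toMatrix_ofTransvection,
      toMatrix_ofTransvection, transvection_mul_transvection_same _ _ (Fin.zero_lt_last hn).ne]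
    rfl

theorem cornerHom_injective (hn : 0 < n) : Function.Injective (cornerHom (p := p) hn) := by
  intro a b h
  have := congrArg (fun g => toMatrix g 0 (Fin.last n)) h
  simpa [cornerHom, toMatrix_ofTransvection, transvection, (Fin.zero_lt_last hn).ne] using this

theorem range_cornerHom_le_center (hn : 0 < n) :
    (cornerHom (p := p) hn).range ≤ Subgroup.center _ := by
  rintro _ ⟨c, rfl⟩
  refine Subgroup.mem_center_iff.2 fun x => toMatrix_injective ?_
  set E : Matrix (Fin (n + 1)) (Fin (n + 1)) (ZMod p) := single 0 (Fin.last n) c.toAdd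
  have hE : E.IsUpperBy n := IsUpperBy.single (by simp)
  have hXE : (toMatrix x - 1) * E = 0 :=
    ((isUpperBy_toMatrix_sub_one x).mul hE).eq_zero (by omega)
  have hEX : E * (toMatrix x - 1) = 0 :=
    (hE.mul (isUpperBy_toMatrix_sub_one x)).eq_zero (by omega)
  rw [map_mul, map_mul]
  change toMatrix x * (1 + E) = (1 + E) * toMatrix x
  calc toMatrix x * (1 + E) = toMatrix x + E + (toMatrix x - 1) * E := by noncomm_ring
    _ = toMatrix x + E + E * (toMatrix x - 1) := by rw [hXE, hEX]
    _ = (1 + E) * toMatrix x := by noncomm_ring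

theorem filtration_le_range_cornerHom (hn : 0 < n) :
    filtration p (n + 1) n ≤ (cornerHom hn).range := by
  intro g hg
  refine ⟨Multiplicative.ofAdd (toMatrix g 0 (Fin.last n)), toMatrix_injective ?_⟩
  have h := IsUpperBy.eq_single hg
  rw [Matrix.sub_apply, one_apply_ne (Fin.zero_lt_last hn).ne, sub_zero] at h
  exact (sub_eq_iff_eq_add'.1 h).symm

theorem range_cornerHom (hn : 0 < n) : (cornerHom (p := p) hn).range = Subgroup.center _ :=
  le_antisymm (range_cornerHom_le_center hn) fun _ hg =>
    filtration_le_range_cornerHom hn (mem_filtration_of_mem_center hg)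

end Center

theorem zassenhaus_le_filtration [Nonempty (Fin N)]
    {Z : ℕ → Subgroup (unipotentUpperTriangular p N)} (hZ : IsZassenhausFiltration p Z) :
    ∀ m, 1 ≤ m → Z m ≤ filtration p N m :=
  hZ.le_of_restricted (Fact.out : p.Prime).one_lt filtration_one filtration_antitone
    (fun _ _ _ ha _ hb => commutator_mem_filtration ha hb)
    (fun _ _ hg => pow_char_mem_filtration hg)

theorem ofTransvection_zero_mem_zassenhaus {n : ℕ}
    {Z : ℕ → Subgroup (unipotentUpperTriangular p (n + 1))} (hZ : IsZassenhausFiltration p Z)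
    {j : Fin (n + 1)} (h0j : 0 < j) (c : ZMod p) : ofTransvection h0j c ∈ Z j := by
  obtain ⟨m, hm⟩ := j
  induction m with
  | zero => exact absurd h0j (lt_irrefl _)
  | succ m ih =>
    obtain rfl | hm0 := Nat.eq_zero_or_pos m
    · rw [hZ.one]; trivial
    have h0m : (0 : Fin (n + 1)) < ⟨m, by omega⟩ := Fin.lt_def.2 hm0
    have hstep : (⟨m, by omega⟩ : Fin (n + 1)) < ⟨m + 1, hm⟩ :=
      Fin.lt_def.2 (Nat.lt_succ_self m)
    have h := hZ.commutator_mem hm0 le_rfl (ih (by omega) h0m)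
      (hZ.one ▸ Subgroup.mem_top (ofTransvection hstep 1))
    rwa [commutator_ofTransvection, mul_one] at h

end unipotentUpperTriangular

open unipotentUpperTriangular in
/-- Let `p` be a prime and `U_{n+1}(F_p)` the group of upper-triangular unipotent
`(n+1) × (n+1)` matrices over `F_p`.  Then the `n`-th term of the Zassenhaus `p`-filtration
`(Z m)` of `U_{n+1}(F_p)` equals the center, which is isomorphic to `F_p`; moreover
`n = max { h : Z h ≠ 1 }`. -/
theorem zassenhaus_of_unipotent
    (p : ℕ) [Fact p.Prime] (n : ℕ) (hn : 1 ≤ n)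
    (Z : ℕ → Subgroup (unipotentUpperTriangular p (n + 1)))
    (hZ1 : Z 1 = ⊤)
    (hZrec : ∀ m : ℕ, 2 ≤ m → Z m = Subgroup.closure
      ({g | ∃ y ∈ Z ((m + p - 1) / p), g = y ^ p} ∪
        {g | ∃ i j : ℕ, 1 ≤ i ∧ 1 ≤ j ∧ i + j = m ∧
          ∃ a ∈ Z i, ∃ b ∈ Z j, g = ⁅a, b⁆})) :
    Z n = Subgroup.center (unipotentUpperTriangular p (n + 1)) ∧
      Nonempty (Subgroup.center (unipotentUpperTriangular p (n + 1)) ≃*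
        Multiplicative (ZMod p)) ∧
      Z n ≠ ⊥ ∧ ∀ h : ℕ, n < h → Z h = ⊥ := by
  have hZ : IsZassenhausFiltration p Z := ⟨hZ1, hZrec⟩
  have hrange := range_cornerHom (p := p) hn
  have hcenter : Z n = Subgroup.center _ := by
    refine le_antisymm ((zassenhaus_le_filtration hZ n hn).trans ?_) ?_
    · exact hrange ▸ filtration_le_range_cornerHom hn
    · rw [← hrange]
      rintro _ ⟨c, rfl⟩
      exact ofTransvection_zero_mem_zassenhaus hZ (Fin.zero_lt_last hn) _
  let e : Subgroup.center (unipotentUpperTriangular p (n + 1)) ≃* Multiplicative (ZMod p) :=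
    (MulEquiv.subgroupCongr hrange).symm.trans
      (MonoidHom.ofInjective (cornerHom_injective hn)).symm
  refine ⟨hcenter, ⟨e⟩, ?_, fun h hh => ?_⟩
  · rw [hcenter]
    exact (Subgroup.nontrivial_iff_ne_bot _).1 e.surjective.nontrivial
  · exact le_bot_iff.1 ((zassenhaus_le_filtration hZ h (by omega)).trans
      (filtration_eq_bot (by omega)).le)
end
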